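/- Let d be a natural number and let C > 0, δ > 0 be real numbers; set α = 2πδ. Let S be the set of triples (a, b, c) ∈ ℤ³ with a ≥ 0, c ≥ 0 and b² ≤ 4ac, and for each (a, b, c) ∈ S let N denote the complex 2×2 matrix [[a, b/2], [b/2, c]], so Tr(N) = a + c. Let Z be a complex symmetric 2×2 matrix such that Im(Z) - δ·I is positive semi-definite. Let a : S → ℂ be a family of complex numbers satisfying |a_{(a,b,c)}| ≤ C·(a+c)^d for every (a, b, c) ∈ S. Let T be a positive integer with T > (d+2)/α. Then the family ((a,b,c) ∈ S with a + c > T) ↦ a_{(a,b,c)}·exp(2πi·Tr(N·Z)) is absolutely summable, and the sum of the absolute values |a_{(a,b,c)}·exp(2πi·Tr(N·Z))| over all (a, b, c) ∈ S with a + c > T is strictly less than (6C(d+3)/α)·exp(-α·T)·T^{d+2}. -/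

import Mathlib

open Real MeasureTheory Set Filter

private lemma aux_psd (a b c m00 m01 m11 : ℝ) (ha : 0 ≤ a) (hc : 0 ≤ c) (hb : b^2 ≤ 4*a*c)
    (h00 : 0 ≤ m00) (h11 : 0 ≤ m11) (hdet : m01^2 ≤ m00*m11) :
    0 ≤ a*m00 + b*m01 + c*m11 := by
  nlinarith [mul_le_mul hb hdet (sq_nonneg m01) (by positivity : (0:ℝ) ≤ 4*a*c),
    sq_nonneg (a*m00 - c*m11), add_nonneg (mul_nonneg ha h00) (mul_nonneg hc h11),
    sq_nonneg (a*m00 + c*m11 + b*m01)]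

private lemma aux_psd2 {M : Matrix (Fin 2) (Fin 2) ℝ} (h : M.PosSemidef) :
    0 ≤ M 0 0 ∧ 0 ≤ M 1 1 ∧ M 1 0 = M 0 1 ∧ (M 0 1)^2 ≤ M 0 0 * M 1 1 := by
  have hsymm : M 1 0 = M 0 1 := by
    have := h.1
    rw [Matrix.IsHermitian] at this
    have h2 := congrFun (congrFun this 0) 1
    simpa [Matrix.conjTranspose_apply] using h2
  have hq : ∀ v : Fin 2 → ℝ, 0 ≤ dotProduct (star v) (M.mulVec v) := h.dotProduct_mulVec_nonneg
  have h00 : 0 ≤ M 0 0 := by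
    have := hq ![1, 0]
    simpa [dotProduct, Matrix.mulVec, Fin.sum_univ_two] using this
  have h11 : 0 ≤ M 1 1 := by
    have := hq ![0, 1]
    simpa [dotProduct, Matrix.mulVec, Fin.sum_univ_two] using this
  refine ⟨h00, h11, hsymm, ?_⟩
  have hd := discrim_le_zero (a := M 0 0) (b := 2 * M 0 1) (c := M 1 1) ?_
  · rw [discrim] at hd
    nlinarith [hd]
  · intro t
    have := hq ![t, 1]
    simp [dotProduct, Matrix.mulVec, Fin.sum_univ_two, hsymm] at this
    nlinarith [this]

private lemma aux_pointwise {δ : ℝ} (Z : Matrix (Fin 2) (Fin 2) ℂ) (hZsymm : Z.IsSymm)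
    (hZ : (Z.map Complex.im - δ • (1 : Matrix (Fin 2) (Fin 2) ℝ)).PosSemidef)
    (p q r : ℤ) (hp : 0 ≤ p) (hr : 0 ≤ r) (hq : q^2 ≤ 4*p*r) :
    Norm.norm (Complex.exp (2 * π * Complex.I *
      ((!![((p:ℂ)), (q:ℂ)/2; (q:ℂ)/2, ((r:ℂ))] : Matrix (Fin 2) (Fin 2) ℂ) * Z).trace))
      ≤ Real.exp (-(2*π*δ) * ((p+r : ℤ):ℝ)) := by
  rw [Complex.norm_exp]
  apply Real.exp_le_exp.2
  have htr : ((!![((p:ℂ)), (q:ℂ)/2; (q:ℂ)/2, ((r:ℂ))] : Matrix (Fin 2) (Fin 2) ℂ) * Z).trace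
      = (p:ℂ) * Z 0 0 + (q:ℂ)/2 * Z 1 0 + ((q:ℂ)/2 * Z 0 1 + (r:ℂ) * Z 1 1) := by
    simp [Matrix.trace_fin_two, Matrix.mul_apply, Fin.sum_univ_two, Matrix.vecMul,
      dotProduct, Matrix.vecHead, Matrix.vecTail]
  rw [htr]
  set w : ℂ := (p:ℂ) * Z 0 0 + (q:ℂ)/2 * Z 1 0 + ((q:ℂ)/2 * Z 0 1 + (r:ℂ) * Z 1 1) with hw
  have hre : (2 * (π:ℂ) * Complex.I * w).re = -(2*π*w.im) := by
    simp [Complex.mul_re, Complex.mul_im]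
  have him : w.im = (p:ℝ) * (Z 0 0).im + (q:ℝ)/2 * (Z 1 0).im
      + ((q:ℝ)/2 * (Z 0 1).im + (r:ℝ) * (Z 1 1).im) := by
    rw [hw]
    simp [Complex.add_im, Complex.mul_im, Complex.div_im]
  obtain ⟨h00, h11, hsm, hdet⟩ := aux_psd2 hZ
  have e00 : (Z.map Complex.im - δ • (1 : Matrix (Fin 2) (Fin 2) ℝ)) 0 0 = (Z 0 0).im - δ := by
    simp [Matrix.sub_apply, Matrix.map_apply, Matrix.smul_apply, Matrix.one_apply]
  have e11 : (Z.map Complex.im - δ • (1 : Matrix (Fin 2) (Fin 2) ℝ)) 1 1 = (Z 1 1).im - δ := by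
    simp [Matrix.sub_apply, Matrix.map_apply, Matrix.smul_apply, Matrix.one_apply]
  have e01 : (Z.map Complex.im - δ • (1 : Matrix (Fin 2) (Fin 2) ℝ)) 0 1 = (Z 0 1).im := by
    simp [Matrix.sub_apply, Matrix.map_apply, Matrix.smul_apply, Matrix.one_apply]
  have hy : (Z 1 0).im = (Z 0 1).im := by
    rw [hZsymm.apply 0 1]
  rw [e00] at h00
  rw [e11] at h11
  rw [e00, e11, e01] at hdet
  have hpR : (0:ℝ) ≤ (p:ℝ) := by exact_mod_cast hp
  have hrR : (0:ℝ) ≤ (r:ℝ) := by exact_mod_cast hr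
  have hqR : ((q:ℝ))^2 ≤ 4*(p:ℝ)*(r:ℝ) := by exact_mod_cast hq
  have key := aux_psd (p:ℝ) (q:ℝ) (r:ℝ) ((Z 0 0).im - δ) ((Z 0 1).im) ((Z 1 1).im - δ)
    hpR hrR hqR h00 h11 hdet
  have him2 : δ * ((p:ℝ) + (r:ℝ)) ≤ w.im := by
    rw [him, hy]
    linarith
  rw [hre]
  push_cast
  nlinarith [pi_pos, mul_le_mul_of_nonneg_left him2 (by positivity : (0:ℝ) ≤ 2*π)]

private lemma aux_tendsto (k : ℕ) {c : ℝ} (hc : 0 < c) :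
    Tendsto (fun x : ℝ => x ^ k * exp (-c * x)) atTop (nhds 0) := by
  have h0 := (tendsto_pow_mul_exp_neg_atTop_nhds_zero k).comp
    (tendsto_id.const_mul_atTop hc)
  have h1 : Tendsto (fun x : ℝ => (1/c^k) * ((c*x)^k * exp (-(c*x)))) atTop (nhds ((1/c^k) * 0)) :=
    h0.const_mul _
  rw [mul_zero] at h1
  refine h1.congr (fun x => ?_)
  rw [mul_pow]
  field_simp

private lemma aux_integrable (k : ℕ) {c : ℝ} (hc : 0 < c) (T : ℝ) :
    IntegrableOn (fun x : ℝ => x ^ k * exp (-c * x)) (Ioi T) := by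
  apply integrable_of_isBigO_exp_neg (half_pos hc) (by fun_prop)
  rw [Asymptotics.isBigO_iff]
  refine ⟨1, ?_⟩
  have h2 : Tendsto (fun x : ℝ => x ^ k * exp (-(c/2) * x)) atTop (nhds 0) :=
    aux_tendsto k (half_pos hc)
  filter_upwards [h2.eventually (eventually_le_nhds one_pos), eventually_ge_atTop (0:ℝ)]
    with x hx hx0
  have : x ^ k * exp (-c * x) = (x ^ k * exp (-(c/2) * x)) * exp (-(c/2) * x) := by
    rw [mul_assoc, ← Real.exp_add]; ring_nf
  rw [this]
  rw [norm_mul, one_mul]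
  apply mul_le_of_le_one_left (norm_nonneg _)
  rw [Real.norm_eq_abs, abs_of_nonneg (by positivity)]
  exact hx

private lemma aux_integral_bound (k : ℕ) {c T : ℝ} (hc : 0 < c) (hT : 0 < T)
    (hk : (k:ℝ) ≤ c*T) :
    ∫ x in Ioi T, x ^ k * exp (-c * x) ≤ ((k:ℝ)+1)/c * (exp (-c*T) * T^k) := by
  induction k with
  | zero =>
    have hderiv : ∀ x ∈ Ici T, HasDerivAt (fun x : ℝ => -(1/c) * exp (-c*x))
        ((fun x : ℝ => x ^ 0 * exp (-c * x)) x) x := by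
      intro x _
      have h2 : HasDerivAt (fun x : ℝ => exp (-c*x)) (exp (-c*x) * (-c*1)) x :=
        (((hasDerivAt_id x).const_mul (-c))).exp
      have := h2.const_mul (-(1/c))
      refine this.congr_deriv ?_
      field_simp
    have htend : Tendsto (fun x : ℝ => -(1/c) * exp (-c*x)) atTop (nhds 0) := by
      have := (aux_tendsto 0 hc).const_mul (-(1/c))
      simpa using this
    rw [integral_Ioi_of_hasDerivAt_of_tendsto' hderiv (by simpa using aux_integrable 0 hc T) htend]
    rw [zero_sub]
    push_cast
    rw [pow_zero]
    field_simp
    norm_num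
  | succ k ih =>
    have hk' : (k:ℝ) ≤ c * T := by push_cast at hk ⊢; linarith
    have ihb := ih hk'
    set g : ℝ → ℝ := fun x => -(1/c) * (x^(k+1) * exp (-c*x)) with hg
    have hderiv : ∀ x ∈ Ici T, HasDerivAt g
        ((fun x : ℝ => x ^ (k+1) * exp (-c * x) - (((k:ℝ)+1)/c) * (x ^ k * exp (-c*x))) x) x := by
      intro x _
      have h1 : HasDerivAt (fun x : ℝ => x^(k+1)) (((k:ℝ)+1) * x^k) x := by
        have := hasDerivAt_pow (k+1) x
        simpa using this
      have h2 : HasDerivAt (fun x : ℝ => exp (-c*x)) (exp (-c*x) * (-c*1)) x :=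
        (((hasDerivAt_id x).const_mul (-c))).exp
      have := (h1.mul h2).const_mul (-(1/c))
      refine this.congr_deriv ?_
      field_simp
      ring
    have htend : Tendsto g atTop (nhds 0) := by
      have h0 := (aux_tendsto (k+1) hc).const_mul (-(1/c))
      simp only [mul_zero, neg_zero] at h0
      exact h0
    have hint1 := aux_integrable (k+1) hc T
    have hint2 := (aux_integrable k hc T).const_mul (((k:ℝ)+1)/c)
    have key := integral_Ioi_of_hasDerivAt_of_tendsto' hderiv (hint1.sub hint2) htend
    rw [integral_sub hint1 hint2, integral_const_mul, zero_sub] at key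
    have hkey2 : ∫ x in Ioi T, x ^ (k+1) * exp (-c * x)
        = (1/c) * (T^(k+1) * exp (-c*T)) + (((k:ℝ)+1)/c) * ∫ x in Ioi T, x ^ k * exp (-c*x) := by
      rw [sub_eq_iff_eq_add] at key
      rw [key, hg]
      ring
    rw [hkey2]
    have hE : (0:ℝ) < exp (-c*T) := exp_pos _
    have hP : (0:ℝ) < T^k := pow_pos hT k
    have hmul : (((k:ℝ)+1)/c) * (∫ x in Ioi T, x ^ k * exp (-c*x))
        ≤ (((k:ℝ)+1)/c) * (((k:ℝ)+1)/c * (exp (-c*T) * T^k)) := by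
      apply mul_le_mul_of_nonneg_left ihb (by positivity)
    have hd : ((k:ℝ)+1)/c ≤ T := by
      rw [div_le_iff₀ hc]
      push_cast at hk
      linarith
    calc (1/c) * (T^(k+1) * exp (-c*T)) + (((k:ℝ)+1)/c) * ∫ x in Ioi T, x ^ k * exp (-c*x)
        ≤ (1/c) * (T^(k+1) * exp (-c*T)) + (((k:ℝ)+1)/c) * (((k:ℝ)+1)/c * (exp (-c*T) * T^k)) := by
          linarith
      _ ≤ ((k:ℝ)+1+1)/c * (exp (-c*T) * T^(k+1)) := by
          have h1 : (((k:ℝ)+1)/c) * (((k:ℝ)+1)/c * (exp (-c*T) * T^k))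
              ≤ (((k:ℝ)+1)/c) * (T * (exp (-c*T) * T^k)) := by
            apply mul_le_mul_of_nonneg_left _ (by positivity)
            apply mul_le_mul_of_nonneg_right hd (by positivity)
          have h2 : T * (exp (-c*T) * T^k) = exp (-c*T) * T^(k+1) := by ring
          rw [h2] at h1
          have h3 : (1/c) * (T^(k+1) * exp (-c*T)) = (1/c) * (exp (-c*T) * T^(k+1)) := by ring
          rw [h3]
          have h4 : ((k:ℝ)+1+1)/c * (exp (-c*T) * T^(k+1))
              = (1/c) * (exp (-c*T) * T^(k+1)) + (((k:ℝ)+1)/c) * (exp (-c*T) * T^(k+1)) := by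
            ring
          rw [h4]
          linarith
      _ = (((k+1:ℕ):ℝ)+1)/c * (exp (-c*T) * T^(k+1)) := by push_cast; ring

private lemma aux_anti {k : ℕ} {c : ℝ} (hc : 0 < c) {T : ℝ} (hT : 0 < T) (hk : (k:ℝ) ≤ c*T) :
    AntitoneOn (fun x : ℝ => x ^ k * exp (-c * x)) (Ici T) := by
  intro x hx y hy hxy
  simp only
  have hx0 : 0 < x := lt_of_lt_of_le hT hx
  have hy0 : 0 < y := lt_of_lt_of_le hT hy
  have h1 : y ≤ x * exp ((y-x)/x) := by
    have h := Real.add_one_le_exp ((y-x)/x)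
    calc y = x * ((y-x)/x + 1) := by field_simp; ring
    _ ≤ x * exp ((y-x)/x) := mul_le_mul_of_nonneg_left h hx0.le
  have h2 : y^k ≤ (x * exp ((y-x)/x))^k := pow_le_pow_left₀ hy0.le h1 k
  have h3 : (x * exp ((y-x)/x))^k = x^k * exp ((k:ℝ)*((y-x)/x)) := by
    rw [mul_pow, ← Real.exp_nat_mul]
  have h4 : exp ((k:ℝ)*((y-x)/x)) ≤ exp (c*(y-x)) := by
    apply exp_le_exp.2
    rw [mul_div_assoc', div_le_iff₀ hx0]
    have hcx : (k:ℝ) ≤ c * x := le_trans hk (mul_le_mul_of_nonneg_left hx hc.le)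
    nlinarith
  have h5 : y^k ≤ x^k * exp (c*(y-x)) := by
    refine le_trans h2 ?_
    rw [h3]
    exact mul_le_mul_of_nonneg_left h4 (by positivity)
  calc y^k * exp (-c*y) ≤ (x^k * exp (c*(y-x))) * exp (-c*y) :=
        mul_le_mul_of_nonneg_right h5 (exp_pos _).le
    _ = x^k * exp (-c*x) := by rw [mul_assoc, ← Real.exp_add]; ring_nf

private def tailEquiv (T : ℕ) : ℕ ≃ {n : ℕ // T < n} :=
  ⟨fun i => ⟨T+1+i, by omega⟩, fun n => n.1 - (T+1),
   fun i => by simp, fun n => by apply Subtype.ext; have := n.2; simp; omega⟩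

private lemma aux_tail (k T : ℕ) {c : ℝ} (hc : 0 < c) (hT : 0 < T) (hk : (k:ℝ) ≤ c*T) :
    Summable (fun n : {n : ℕ // T < n} => ((n:ℕ):ℝ)^k * exp (-c*(n:ℕ))) ∧
    ∑' n : {n : ℕ // T < n}, ((n:ℕ):ℝ)^k * exp (-c*(n:ℕ))
      ≤ ((k:ℝ)+1)/c * (exp (-c*T) * (T:ℝ)^k) := by
  have hT' : (0:ℝ) < (T:ℝ) := by exact_mod_cast hT
  have hsumN : Summable (fun n : ℕ => ((n:ℕ):ℝ)^k * exp (-c*(n:ℕ))) := by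
    have hr : ‖exp (-c)‖ < 1 := by
      rw [Real.norm_eq_abs, abs_of_pos (exp_pos _)]
      exact exp_lt_one_iff.2 (by linarith)
    have := summable_pow_mul_geometric_of_norm_lt_one k hr
    refine this.congr fun n => ?_
    rw [← Real.exp_nat_mul]
    ring_nf
  have hsub : Summable (fun n : {n : ℕ // T < n} => ((n:ℕ):ℝ)^k * exp (-c*(n:ℕ))) :=
    hsumN.subtype _
  refine ⟨hsub, ?_⟩
  have he : ∑' i : ℕ, ((T+1+i:ℕ):ℝ)^k * exp (-c*((T+1+i:ℕ):ℝ))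
      = ∑' n : {n : ℕ // T < n}, ((n:ℕ):ℝ)^k * exp (-c*(n:ℕ)) := by
    rw [← (tailEquiv T).tsum_eq (fun n : {n : ℕ // T < n} => ((n:ℕ):ℝ)^k * exp (-c*(n:ℕ)))]
    exact tsum_congr fun i => rfl
  rw [← he]
  have hint := aux_integrable k hc (T:ℝ)
  have hbd : ∀ M : ℕ, ∑ i ∈ Finset.range M, ((T+1+i:ℕ):ℝ)^k * exp (-c*((T+1+i:ℕ):ℝ))
      ≤ ((k:ℝ)+1)/c * (exp (-c*T) * (T:ℝ)^k) := by
    intro M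
    have hanti : AntitoneOn (fun x : ℝ => x ^ k * exp (-c * x)) (Icc (T:ℝ) ((T:ℝ)+M)) :=
      (aux_anti hc hT' hk).mono (fun x hx => hx.1)
    have h1 := hanti.sum_le_integral
    have h2 : ∑ i ∈ Finset.range M, ((T+1+i:ℕ):ℝ)^k * exp (-c*((T+1+i:ℕ):ℝ))
        = ∑ i ∈ Finset.range M, (fun x : ℝ => x ^ k * exp (-c * x)) ((T:ℝ) + ((i+1:ℕ):ℝ)) := by
      apply Finset.sum_congr rfl
      intro i _
      have hcast : ((T+1+i:ℕ):ℝ) = (T:ℝ) + ((i+1:ℕ):ℝ) := by push_cast; ring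
      rw [hcast]
    rw [h2]
    refine le_trans h1 ?_
    have h3 : ∫ x in (T:ℝ)..((T:ℝ)+M), x ^ k * exp (-c * x)
        = ∫ x in Ioc (T:ℝ) ((T:ℝ)+M), x ^ k * exp (-c * x) := by
      rw [intervalIntegral.integral_of_le (le_add_of_nonneg_right (Nat.cast_nonneg M))]
    rw [h3]
    refine le_trans ?_ (aux_integral_bound k hc hT' hk)
    apply setIntegral_mono_set hint
    · rw [EventuallyLE, ae_restrict_iff' measurableSet_Ioi]
      refine ae_of_all _ fun x hx => ?_
      have hx0 : (0:ℝ) < x := lt_trans hT' hx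
      positivity
    · exact (Ioc_subset_Ioi_self).eventuallyLE
  have hg : Summable (fun i : ℕ => ((T+1+i:ℕ):ℝ)^k * exp (-c*((T+1+i:ℕ):ℝ))) := by
    have h := ((tailEquiv T).summable_iff
      (f := fun n : {n : ℕ // T < n} => ((n:ℕ):ℝ)^k * exp (-c*(n:ℕ)))).2 hsub
    exact h.congr fun i => rfl
  exact hg.tsum_le_of_sum_range_le hbd

open Real in
theorem truncation_error_bound (d : ℕ) (C δ : ℝ) (hC : 0 < C) (hδ : 0 < δ)
    (α : ℝ) (hαdef : α = 2 * π * δ)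
    (Z : Matrix (Fin 2) (Fin 2) ℂ) (hZsymm : Z.IsSymm)
    (hZ : (Z.map Complex.im - δ • (1 : Matrix (Fin 2) (Fin 2) ℝ)).PosSemidef)
    (a : {x : ℤ × ℤ × ℤ // 0 ≤ x.1 ∧ 0 ≤ x.2.2 ∧ x.2.1 ^ 2 ≤ 4 * x.1 * x.2.2} → ℂ)
    (ha : ∀ s, Norm.norm (a s) ≤ C * ((s.1.1 + s.1.2.2 : ℤ) : ℝ) ^ d)
    (T : ℕ) (hT : 0 < T) (hT2 : ((d : ℝ) + 2) / α < T) :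
    Summable (fun u : {s : {x : ℤ × ℤ × ℤ //
          0 ≤ x.1 ∧ 0 ≤ x.2.2 ∧ x.2.1 ^ 2 ≤ 4 * x.1 * x.2.2} // (T : ℤ) < s.1.1 + s.1.2.2} =>
        Norm.norm (a u.1 *
          Complex.exp (2 * π * Complex.I *
            ((!![((u.1.1.1 : ℂ)), (u.1.1.2.1 : ℂ) / 2;
                 (u.1.1.2.1 : ℂ) / 2, ((u.1.1.2.2 : ℂ))] : Matrix (Fin 2) (Fin 2) ℂ) *
              Z).trace))) ∧
    ∑' u : {s : {x : ℤ × ℤ × ℤ //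
          0 ≤ x.1 ∧ 0 ≤ x.2.2 ∧ x.2.1 ^ 2 ≤ 4 * x.1 * x.2.2} // (T : ℤ) < s.1.1 + s.1.2.2},
        Norm.norm (a u.1 *
          Complex.exp (2 * π * Complex.I *
            ((!![((u.1.1.1 : ℂ)), (u.1.1.2.1 : ℂ) / 2;
                 (u.1.1.2.1 : ℂ) / 2, ((u.1.1.2.2 : ℂ))] : Matrix (Fin 2) (Fin 2) ℂ) *
              Z).trace)) <
      6 * C * ((d : ℝ) + 3) / α * Real.exp (-α * T) * (T : ℝ) ^ (d + 2) := by
  have hα : 0 < α := by rw [hαdef]; positivity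
  have hkT : ((d:ℝ) + 2) ≤ α * T := by
    rw [div_lt_iff₀ hα] at hT2
    linarith
  have hkT' : (((d+2:ℕ)):ℝ) ≤ α * T := by push_cast; linarith
  obtain ⟨hTsum, hTbd⟩ := aux_tail (d+2) T hα hT hkT'
  -- notation
  set F : {s : {x : ℤ × ℤ × ℤ //
      0 ≤ x.1 ∧ 0 ≤ x.2.2 ∧ x.2.1 ^ 2 ≤ 4 * x.1 * x.2.2} // (T : ℤ) < s.1.1 + s.1.2.2} → ℝ :=
    fun u => Norm.norm (a u.1 *
      Complex.exp (2 * π * Complex.I *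
        ((!![((u.1.1.1 : ℂ)), (u.1.1.2.1 : ℂ) / 2;
             (u.1.1.2.1 : ℂ) / 2, ((u.1.1.2.2 : ℂ))] : Matrix (Fin 2) (Fin 2) ℂ) *
          Z).trace)) with hF
  set φ : {s : {x : ℤ × ℤ × ℤ //
      0 ≤ x.1 ∧ 0 ≤ x.2.2 ∧ x.2.1 ^ 2 ≤ 4 * x.1 * x.2.2} // (T : ℤ) < s.1.1 + s.1.2.2} → ℕ :=
    fun u => (u.1.1.1 + u.1.1.2.2).toNat with hφ
  have hφ1 : ∀ u, ((φ u : ℕ) : ℤ) = u.1.1.1 + u.1.1.2.2 := by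
    intro u
    have h1 := u.1.2.1
    have h2 := u.1.2.2.1
    simp only [hφ]
    omega
  have hφ2 : ∀ u, T < φ u := by
    intro u
    have h := u.2
    have := hφ1 u
    omega
  set h : ℕ → ℝ := fun n => C * (n:ℝ)^d * exp (-α * n) with hh
  set g : ℕ → ℝ := fun n => (n:ℝ)^(d+2) * exp (-α * n) with hgdef
  have hpt : ∀ u, F u ≤ h (φ u) := by
    intro u
    rw [hF]
    simp only [norm_mul]
    have hb1 := ha u.1
    have hb2 := aux_pointwise Z hZsymm hZ u.1.1.1 u.1.1.2.1 u.1.1.2.2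
      u.1.2.1 u.1.2.2.1 u.1.2.2.2
    have hcast : ((u.1.1.1 + u.1.1.2.2 : ℤ) : ℝ) = ((φ u : ℕ) : ℝ) := by
      rw [← hφ1 u]
      push_cast
      ring
    rw [hcast] at hb1 hb2
    have hnn : (0:ℝ) ≤ C * ((φ u : ℕ):ℝ)^d := by positivity
    calc Norm.norm (a u.1) * Norm.norm (Complex.exp (2 * π * Complex.I *
          ((!![((u.1.1.1 : ℂ)), (u.1.1.2.1 : ℂ) / 2;
               (u.1.1.2.1 : ℂ) / 2, ((u.1.1.2.2 : ℂ))] : Matrix (Fin 2) (Fin 2) ℂ) * Z).trace))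
        ≤ (C * ((φ u : ℕ):ℝ)^d) * Real.exp (-(2*π*δ) * ((φ u : ℕ):ℝ)) := by
          apply mul_le_mul hb1 hb2 (norm_nonneg _) hnn
      _ = h (φ u) := by rw [hh, hαdef]
  -- finite sum bound
  have hB0 : (0:ℝ) < ((d:ℝ)+3)/α * (exp (-α*T) * (T:ℝ)^(d+2)) := by
    have : (0:ℝ) < (T:ℝ) := by exact_mod_cast hT
    positivity
  have hfin : ∀ v : Finset {s : {x : ℤ × ℤ × ℤ //
      0 ≤ x.1 ∧ 0 ≤ x.2.2 ∧ x.2.1 ^ 2 ≤ 4 * x.1 * x.2.2} // (T : ℤ) < s.1.1 + s.1.2.2},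
      ∑ s ∈ v, F s ≤ 4*C*(((d:ℝ)+3)/α * (exp (-α*T) * (T:ℝ)^(d+2))) := by
    intro v
    have hcard : ∀ n ∈ v.image φ, (v.filter (fun s => φ s = n)).card ≤ 4*n^2 := by
      intro n hn
      obtain ⟨s0, hs0, hs0n⟩ := Finset.mem_image.1 hn
      have hn2 : 2 ≤ n := by
        have := hφ2 s0
        omega
      have hinj : (v.filter (fun s => φ s = n)).card
          ≤ ((Finset.Icc (0:ℤ) (n:ℤ)) ×ˢ (Finset.Icc (-(n:ℤ)) (n:ℤ))).card := by
        apply Finset.card_le_card_of_injOn (fun s => (s.1.1.1, s.1.1.2.1))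
        · intro s hs
          rw [Finset.mem_coe, Finset.mem_filter] at hs
          have hsum : s.1.1.1 + s.1.1.2.2 = (n:ℤ) := by
            have := hφ1 s
            rw [hs.2] at this
            omega
          have hc1 := s.1.2.1
          have hc2 := s.1.2.2.1
          have hc3 := s.1.2.2.2
          simp only [Finset.mem_coe, Finset.mem_product, Finset.mem_Icc]
          constructor
          · constructor
            · exact hc1
            · omega
          · constructor
            · nlinarith [sq_nonneg (s.1.1.1 - s.1.1.2.2), sq_nonneg (s.1.1.2.1 + (n:ℤ))]
            · nlinarith [sq_nonneg (s.1.1.1 - s.1.1.2.2), sq_nonneg (s.1.1.2.1 - (n:ℤ))]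
        · intro s hs t ht heq
          simp only [Finset.coe_filter, Set.mem_setOf_eq] at hs ht
          simp only [Prod.mk.injEq] at heq
          obtain ⟨h1, h2⟩ := heq
          have h3 : s.1.1.2.2 = t.1.1.2.2 := by
            have e1 := hφ1 s
            have e2 := hφ1 t
            rw [hs.2] at e1
            rw [ht.2] at e2
            omega
          apply Subtype.ext
          apply Subtype.ext
          exact Prod.ext_iff.2 ⟨h1, Prod.ext_iff.2 ⟨h2, h3⟩⟩
      refine le_trans hinj ?_
      rw [Finset.card_product, Int.card_Icc, Int.card_Icc]
      have c1 : ((n:ℤ) + 1 - 0).toNat = n + 1 := by omega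
      have c2 : ((n:ℤ) + 1 - (-(n:ℤ))).toNat = 2*n + 1 := by omega
      rw [c1, c2]
      nlinarith
    calc ∑ s ∈ v, F s ≤ ∑ s ∈ v, h (φ s) := Finset.sum_le_sum (fun s _ => hpt s)
      _ = ∑ n ∈ v.image φ, (v.filter (fun s => φ s = n)).card • h n := Finset.sum_comp h φ
      _ ≤ ∑ n ∈ v.image φ, (4*C) * g n := by
          apply Finset.sum_le_sum
          intro n hn
          rw [nsmul_eq_mul]
          have hhn : (0:ℝ) ≤ h n := by rw [hh]; positivity
          have hcn : ((v.filter (fun s => φ s = n)).card : ℝ) ≤ ((4*n^2 : ℕ) : ℝ) := by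
            exact_mod_cast hcard n hn
          calc ((v.filter (fun s => φ s = n)).card : ℝ) * h n
              ≤ ((4*n^2 : ℕ) : ℝ) * h n := mul_le_mul_of_nonneg_right hcn hhn
            _ = (4*C) * g n := by
                rw [hh, hgdef]
                push_cast
                ring
      _ ≤ (4*C) * ∑' m : {n : ℕ // T < n}, g m.1 := by
          rw [← Finset.mul_sum]
          apply mul_le_mul_of_nonneg_left _ (by positivity)
          have himg : ∀ n ∈ v.image φ, T < n := by
            intro n hn
            obtain ⟨s0, _, hs0n⟩ := Finset.mem_image.1 hn
            rw [← hs0n]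
            exact hφ2 s0
          have heq2 : ∑ n ∈ v.image φ, g n
              = ∑ m ∈ (v.image φ).subtype (fun n => T < n), g m.1 := by
            rw [Finset.sum_subtype_eq_sum_filter]
            rw [Finset.filter_true_of_mem himg]
          rw [heq2]
          apply hTsum.sum_le_tsum _ (fun i _ => by positivity)
      _ ≤ 4*C*(((d:ℝ)+3)/α * (exp (-α*T) * (T:ℝ)^(d+2))) := by
          apply mul_le_mul_of_nonneg_left _ (by positivity)
          refine le_trans hTbd ?_
          apply le_of_eq
          push_cast
          ring
  have hF0 : (0:ℝ) ≤ 1 → True := fun _ => trivial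
  have hsummable := summable_of_sum_le (fun u => norm_nonneg _) hfin
  refine ⟨hsummable, ?_⟩
  have htsum := hsummable.tsum_le_of_sum_le hfin
  refine lt_of_le_of_lt htsum ?_
  have hgoal : 6 * C * ((d : ℝ) + 3) / α * Real.exp (-α * T) * (T : ℝ) ^ (d + 2)
      = 6*C*(((d:ℝ)+3)/α * (exp (-α*T) * (T:ℝ)^(d+2))) := by ring
  rw [hgoal]
  nlinarith [hB0]
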